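/- arXiv:2207.08763 — 4 statements merged into one kernel-verified Lean document; each statement's English description precedes it below -/
import Mathlib

section
/- With the coefficients 𝒜 = (C-A)(b-a) - (c-a)(B-A) and ℬ = -(B+c)(C-A)(b-a) + (b+C)(c-a)(B-A): if 𝒜 = 0 and all ladder edge lengths are nonzero, then ℬ = 0 if and only if B - b = C - c. -/
noncomputable def ladderA (A B C a b c : ℝ) : ℝ := (C - A) * (b - a) - (c - a) * (B - A)
noncomputable def ladderB (A B C a b c : ℝ) : ℝ := -(B + c) * (C - A) * (b - a) + (b + C) * (c - a) * (B - A)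
noncomputable def ladderC (A B C a b c : ℝ) : ℝ := c * B * (C - A) * (b - a) - C * b * (c - a) * (B - A)
noncomputable def ladderD (A B C a b c : ℝ) : ℝ := (ladderB A B C a b c) ^ 2 - 4 * ladderA A B C a b c * ladderC A B C a b c

theorem ladderB_eq_mul_sub_sub_mul_ladderA (A B C a b c : ℝ) :
    ladderB A B C a b c =
      (C - A) * (b - a) * ((C - c) - (B - b)) - (b + C) * ladderA A B C a b c := by
  unfold ladderA ladderB
  ring

theorem stmt_2_general (A B C a b c : ℝ)
    (hCA : C - A ≠ 0)
    (hba : b - a ≠ 0)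
    (hA : ladderA A B C a b c = 0) :
    ladderB A B C a b c = 0 ↔ B - b = C - c := by
  rw [ladderB_eq_mul_sub_sub_mul_ladderA, hA, mul_zero, sub_zero,
    mul_eq_zero, or_iff_right (mul_ne_zero hCA hba), sub_eq_zero, eq_comm]

theorem stmt_2 (A B C a b c : ℝ)
    (hBA : B - A ≠ 0) (hCA : C - A ≠ 0) (hCB : C - B ≠ 0)
    (hba : b - a ≠ 0) (hca : c - a ≠ 0) (hcb : c - b ≠ 0)
    (haA : a - A ≠ 0) (hbB : b - B ≠ 0) (hcC : c - C ≠ 0)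
    (hA : ladderA A B C a b c = 0) :
    ladderB A B C a b c = 0 ↔ B - b = C - c :=
  stmt_2_general A B C a b c hCA hba hA
end

section
/- Fix real numbers A,B,C,a,b and regard the discriminant D(A,B,C,a,b,t) = ℬ(t)² - 4𝒜(t)𝒞(t) as a polynomial in t. If this polynomial has degree exactly 2 in t, and all ladder edge lengths with the variable last coordinate are nonzero (in particular B-A, C-A, C-B, b-a, a-A, b-B are nonzero), then its discriminant (as a quadratic in t) is nonzero; hence the set {t : D(A,B,C,a,b,t) = 0} cannot be a single point with D ≤ 0 nearby on both sides. -/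
/-!
The three ladder coefficients are affine in `t`, so `D(t) = ℬ(t)² - 4𝒜(t)𝒞(t)` is the conic
`Y² = 4XZ` restricted to a line. The discriminant of such a restriction is, up to the factor 16,
the dual conic evaluated at the cross product `w` of the line's two coefficient vectors, namely
`w_Y² - w_X w_Z`. For the ladder this factors as
`(B - A)(C - A)²(C - B)²(b - a)³(a - A)(b - B)`, which is nonzero.
-/

theorem quadratic_coeffs_unique {K : Type*} [Field K] [NeZero (2 : K)] {p q r p' q' r' : K}
    (h : ∀ t, p * t ^ 2 + q * t + r = p' * t ^ 2 + q' * t + r') :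
    p = p' ∧ q = q' ∧ r = r' := by
  have h₀ := h 0
  have h₁ := h 1
  have h₂ := h (-1)
  have hp : 2 * p = 2 * p' := by linear_combination h₁ + h₂ - 2 * h₀
  have hq : 2 * q = 2 * q' := by linear_combination h₁ - h₂
  exact ⟨mul_left_cancel₀ two_ne_zero hp, mul_left_cancel₀ two_ne_zero hq, by
    linear_combination h₀⟩

theorem discrim_eq_of_sq_sub_four_mul_affine {K : Type*} [Field K] [NeZero (2 : K)]
    {x₀ x₁ y₀ y₁ z₀ z₁ p q r : K}
    (h : ∀ t, (y₀ + y₁ * t) ^ 2 - 4 * (x₀ + x₁ * t) * (z₀ + z₁ * t) = p * t ^ 2 + q * t + r) :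
    discrim p q r =
      16 * ((z₀ * x₁ - x₀ * z₁) ^ 2 - (y₀ * z₁ - z₀ * y₁) * (x₀ * y₁ - y₀ * x₁)) := by
  obtain ⟨rfl, rfl, rfl⟩ := quadratic_coeffs_unique (p' := y₁ ^ 2 - 4 * x₁ * z₁)
    (q' := 2 * y₀ * y₁ - 4 * (x₀ * z₁ + x₁ * z₀)) (r' := y₀ ^ 2 - 4 * x₀ * z₀)
    fun t => (h t).symm.trans (by ring)
  unfold discrim
  ring

theorem stmt_4_general (A B C a b : ℝ)
    (hBA : B - A ≠ 0) (hCA : C - A ≠ 0) (hCB : C - B ≠ 0)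
    (hba : b - a ≠ 0) (haA : a - A ≠ 0) (hbB : b - B ≠ 0)
    (p q r : ℝ)
    (hquad : ∀ t : ℝ, ladderD A B C a b t = p * t ^ 2 + q * t + r) :
    q ^ 2 - 4 * p * r ≠ 0 := by
  have hdisc := discrim_eq_of_sq_sub_four_mul_affine
    (x₀ := (C - A) * (b - a) + a * (B - A)) (x₁ := -(B - A))
    (y₀ := -(B * (C - A) * (b - a) + a * (b + C) * (B - A)))
    (y₁ := (b + C) * (B - A) - (C - A) * (b - a))
    (z₀ := a * C * b * (B - A)) (z₁ := B * (C - A) * (b - a) - C * b * (B - A))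
    fun t => by rw [← hquad]; simp only [ladderD, ladderA, ladderB, ladderC]; ring
  have hfactors : 16 * (B - A) * (C - A) ^ 2 * (C - B) ^ 2 * (b - a) ^ 3 * (a - A) * (b - B) ≠ 0 := by
    simp [hBA, hCA, hCB, hba, haA, hbB]
  rw [← discrim, hdisc]
  convert hfactors using 1
  ring

theorem stmt_4 (A B C a b : ℝ)
    (hBA : B - A ≠ 0) (hCA : C - A ≠ 0) (hCB : C - B ≠ 0)
    (hba : b - a ≠ 0) (haA : a - A ≠ 0) (hbB : b - B ≠ 0)
    (p q r : ℝ) (hp : p ≠ 0)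
    (hquad : ∀ t : ℝ, ladderD A B C a b t = p * t ^ 2 + q * t + r) :
    q ^ 2 - 4 * p * r ≠ 0 :=
  stmt_4_general A B C a b hBA hCA hCB hba haA hbB p q r hquad
end

section
/- After the projective normalization A = -1, B = 0, C = 1, the discriminant-of-the-discriminant satisfies DD(a,b) = -64·b·(a+1)·(a-b)³, where DD is the discriminant (in c) of the quadratic polynomial c ↦ D(-1,0,1,a,b,c). Consequently DD(a,b) = 0 only if b = 0, or a = -1, or a = b. -/
/-!
With `A = -1, B = 0, C = 1` the coefficients are `𝒜 = 2b - a - c`, `ℬ = (2a - b + 1) c - a (b + 1)`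
and `𝒞 = -b (c - a)`, so `D` is an explicit quadratic in `c`. Its coefficients are determined by
its values at `c = 0, 1, -1`, and expanding their discriminant gives `-64 b (a + 1) (a - b)³`.
-/

theorem quadratic_coeffs_eq_of_forall_eq {K : Type*} [Field K] [CharZero K] {p q r p' q' r' : K}
    (h : ∀ x : K, p * x ^ 2 + q * x + r = p' * x ^ 2 + q' * x + r') :
    p = p' ∧ q = q' ∧ r = r' := by
  have h₀ := h 0
  have h₁ := h 1
  have h₂ := h (-1)
  refine ⟨?_, ?_, ?_⟩
  · linear_combination (1 / 2 : K) * h₁ + (1 / 2 : K) * h₂ - h₀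
  · linear_combination (1 / 2 : K) * h₁ - (1 / 2 : K) * h₂
  · linear_combination h₀

theorem ladderD_neg_one_zero_one (a b c : ℝ) :
    ladderD (-1) 0 1 a b c =
      ((2 * a - b + 1) ^ 2 - 4 * b) * c ^ 2 + (8 * b ^ 2 - 2 * a * (b + 1) * (2 * a - b + 1)) * c
        + (a ^ 2 * (b + 1) ^ 2 + 4 * a * b * (a - 2 * b)) := by
  simp only [ladderD, ladderA, ladderB, ladderC]
  ring

theorem discrim_ladderD_neg_one_zero_one (a b : ℝ) :
    discrim ((2 * a - b + 1) ^ 2 - 4 * b) (8 * b ^ 2 - 2 * a * (b + 1) * (2 * a - b + 1))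
      (a ^ 2 * (b + 1) ^ 2 + 4 * a * b * (a - 2 * b)) = -64 * b * (a + 1) * (a - b) ^ 3 := by
  rw [discrim]
  ring

theorem eq_zero_or_eq_neg_one_or_eq_of_mul_eq_zero {a b : ℝ}
    (h : -64 * b * (a + 1) * (a - b) ^ 3 = 0) : b = 0 ∨ a = -1 ∨ a = b := by
  simpa [sub_eq_zero, add_eq_zero_iff_eq_neg, or_assoc] using h

theorem stmt_5 (a b : ℝ) (p q r : ℝ)
    (hquad : ∀ c : ℝ, ladderD (-1) 0 1 a b c = p * c ^ 2 + q * c + r) :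
    q ^ 2 - 4 * p * r = -64 * b * (a + 1) * (a - b) ^ 3 ∧
    (q ^ 2 - 4 * p * r = 0 → b = 0 ∨ a = -1 ∨ a = b) := by
  obtain ⟨rfl, rfl, rfl⟩ := quadratic_coeffs_eq_of_forall_eq fun c ↦
    (ladderD_neg_one_zero_one a b c).symm.trans (hquad c)
  have hDD := discrim_ladderD_neg_one_zero_one a b
  exact ⟨hDD, fun h ↦ eq_zero_or_eq_neg_one_or_eq_of_mul_eq_zero (hDD ▸ h)⟩
end

section
/- Let A,B,C,a,b,c be real numbers forming a stretched cycle A < B, B > b, b > a, a > A (i.e. A < a < b < B), with all ladder edge lengths nonzero. Then the discriminant D(A,B,C,a,b,c) > 0 for all real C, c making edge lengths nonzero. -/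
/-!
The discriminant is that of the quadratic
`q(x) = 𝒜 x² + ℬ x + 𝒞 = (C - A)(b - a)(x - B)(x - c) - (c - a)(B - A)(x - b)(x - C)`.
Evaluating at the two rungs gives `q(A) = (C - A)(B - A)(c - b)(A - a)` and
`q(b) = (C - A)(b - a)(b - B)(b - c)`; for a stretched cycle `A < a < b < B` these have opposite
signs, so `q` changes sign and its discriminant is positive.
-/

section Discriminant

variable {K : Type*} [Field K] [LinearOrder K] [IsStrictOrderedRing K] {a b c : K}

theorem discrim_pos_of_mul_neg {x y : K}
    (h : (a * (x * x) + b * x + c) * (a * (y * y) + b * y + c) < 0) : 0 < discrim a b c := by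
  by_contra! hd
  have four_mul_nonneg (z : K) : 0 ≤ 4 * a * (a * (z * z) + b * z + c) := by
    have : 4 * a * (a * (z * z) + b * z + c) = (2 * a * z + b) ^ 2 - discrim a b c := by
      rw [discrim]; ring
    rw [this]
    linarith [sq_nonneg (2 * a * z + b)]
  rcases eq_or_ne a 0 with rfl | ha
  · have hb : b = 0 := by
      rw [discrim] at hd
      nlinarith [sq_nonneg b]
    subst hb
    nlinarith [mul_self_nonneg c]
  · have hprod := mul_nonneg (four_mul_nonneg x) (four_mul_nonneg y)
    have ha2 : 0 < 16 * a ^ 2 := by positivity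
    nlinarith

end Discriminant

lemma ladderD_eq_discrim (A B C a b c : ℝ) :
    ladderD A B C a b c = discrim (ladderA A B C a b c) (ladderB A B C a b c) (ladderC A B C a b c) := by
  rw [ladderD, discrim]

lemma ladder_quadratic_eq (A B C a b c x : ℝ) :
    ladderA A B C a b c * (x * x) + ladderB A B C a b c * x + ladderC A B C a b c =
      (C - A) * (b - a) * (x - B) * (x - c) - (c - a) * (B - A) * (x - b) * (x - C) := by
  rw [ladderA, ladderB, ladderC]; ring

theorem stmt_6_general (A B C a b c : ℝ)
    (h1 : A < a) (h2 : a < b) (h3 : b < B)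
    (hCA : C - A ≠ 0)
    (hcb : c - b ≠ 0) :
    ladderD A B C a b c > 0 := by
  rw [ladderD_eq_discrim]
  apply discrim_pos_of_mul_neg (x := A) (y := b)
  rw [ladder_quadratic_eq, ladder_quadratic_eq]
  have hstretch : 0 < (B - A) * (a - A) * (b - a) * (B - b) := by
    have := sub_pos.2 (h1.trans (h2.trans h3))
    have := sub_pos.2 h1
    have := sub_pos.2 h2
    have := sub_pos.2 h3
    positivity
  have hsq : 0 < ((C - A) * (c - b)) ^ 2 := sq_pos_of_ne_zero (mul_ne_zero hCA hcb)
  calc _ = -(((C - A) * (c - b)) ^ 2 * ((B - A) * (a - A) * (b - a) * (B - b))) := by ring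
    _ < 0 := neg_neg_of_pos (mul_pos hsq hstretch)

theorem stmt_6 (A B C a b c : ℝ)
    (h1 : A < a) (h2 : a < b) (h3 : b < B)
    (hBA : B - A ≠ 0) (hCA : C - A ≠ 0) (hCB : C - B ≠ 0)
    (hba : b - a ≠ 0) (hca : c - a ≠ 0) (hcb : c - b ≠ 0)
    (haA : a - A ≠ 0) (hbB : b - B ≠ 0) (hcC : c - C ≠ 0) :
    ladderD A B C a b c > 0 :=
  stmt_6_general A B C a b c h1 h2 h3 hCA hcb
end
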